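/- arXiv:2201.01949 — 2 statements merged into one kernel-verified Lean document; each statement's English description precedes it below -/
import Mathlib

section
/- Let p ≥ 2 and set q = p/2, θ = 1/2 - 1/p, y = 1 + 4/(p-2). Then the Del Pino–Dolbeault constant A_{q,2} = ((p+2)(p-2)/(16π))^{1/4 - 1/(2p)} · (4/(p+2))^{1/p} · (4/(p-2))^{1/4 - 1/(2p)} satisfies A_{q,2} ≤ C p^{1/4} for an absolute constant C > 0 independent of p. -/
open Real

theorem stmt_0 :
    ∃ C : ℝ, 0 < C ∧ ∀ p : ℝ, 2 ≤ p →
      (((p + 2) * (p - 2) / (16 * π)) ^ (1/4 - 1/(2*p)) *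
        (4 / (p + 2)) ^ (1/p) *
        (4 / (p - 2)) ^ (1/4 - 1/(2*p)) : ℝ) ≤ C * p ^ ((1:ℝ)/4) := by
  refine ⟨1, one_pos, fun p hp => ?_⟩
  have hπ : (3:ℝ) < π := pi_gt_three
  have hp0 : (0:ℝ) < p := by linarith
  have hp2 : (0:ℝ) ≤ p - 2 := by linarith
  set e : ℝ := 1/4 - 1/(2*p) with he_def
  have he0 : 0 ≤ e := by
    have : 1/(2*p) ≤ 1/4 := by
      apply one_div_le_one_div_of_le <;> linarith
    simpa [he_def] using this
  have he4 : e ≤ 1/4 := by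
    have : 0 ≤ 1/(2*p) := by positivity
    simp [he_def]; linarith
  have ha : (0:ℝ) ≤ (p + 2) * (p - 2) / (16 * π) := by positivity
  have hc : (0:ℝ) ≤ 4 / (p - 2) := by positivity
  have hb : (4 / (p + 2) : ℝ) ^ (1/p) ≤ 1 := by
    apply Real.rpow_le_one (by positivity) ?_ (by positivity)
    rw [div_le_one (by linarith)]; linarith
  have hprod : (p + 2) * (p - 2) / (16 * π) * (4 / (p - 2)) ≤ p := by
    rcases eq_or_lt_of_le hp with h | h
    · rw [← h]; norm_num
    · have hp2' : (0:ℝ) < p - 2 := by linarith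
      rw [div_mul_div_comm, div_le_iff₀ (by positivity)]
      nlinarith [mul_pos hp0 hp2', mul_le_mul_of_nonneg_left hπ.le (mul_nonneg hp0.le hp2)]
  calc ((p + 2) * (p - 2) / (16 * π)) ^ e * (4 / (p + 2)) ^ (1/p) *
        (4 / (p - 2)) ^ e
      = ((p + 2) * (p - 2) / (16 * π) * (4 / (p - 2))) ^ e *
        (4 / (p + 2)) ^ (1/p) := by
        rw [Real.mul_rpow ha hc]; ring
    _ ≤ p ^ e * 1 := by
        apply mul_le_mul ?_ hb (by positivity) (by positivity)
        exact Real.rpow_le_rpow (by positivity) hprod he0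
    _ = p ^ e := mul_one _
    _ ≤ p ^ ((1:ℝ)/4) := Real.rpow_le_rpow_of_exponent_le (by linarith) he4
    _ = 1 * p ^ ((1:ℝ)/4) := (one_mul _).symm
end

section
/- Let χ ≥ 1 and t ≥ 0, and set τ = (χt)². Then log(1+τ+t)² - log(1+τ)² ≤ C/χ for an absolute constant C > 0. -/
theorem stmt_7 :
    ∃ C : ℝ, 0 < C ∧ ∀ χ : ℝ, 1 ≤ χ → ∀ t : ℝ, 0 ≤ t →
      (Real.log (1 + (χ*t)^2 + t))^2 - (Real.log (1 + (χ*t)^2))^2 ≤ C / χ := by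
  refine ⟨6, by norm_num, ?_⟩
  intro χ hχ t ht
  set τ := (χ*t)^2 with hτ
  have hτ0 : 0 ≤ τ := sq_nonneg _
  have h1 : (0:ℝ) < 1 + τ := by linarith
  have hχ0 : (0:ℝ) < χ := by linarith
  set a := Real.log (1 + τ + t) with ha_def
  set b := Real.log (1 + τ) with hb_def
  have hb0 : 0 ≤ b := Real.log_nonneg (by linarith)
  have ha0 : 0 ≤ a := Real.log_nonneg (by linarith)
  have hab : b ≤ a := Real.log_le_log h1 (by linarith)
  have hd : a - b ≤ t / (1+τ) := by
    have hdd : a - b = Real.log ((1+τ+t)/(1+τ)) :=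
      (Real.log_div (by linarith) (by linarith)).symm
    rw [hdd]
    have hx : (1+τ+t)/(1+τ) = 1 + t/(1+τ) := by field_simp
    rw [hx]
    have := Real.log_le_sub_one_of_pos (x := 1 + t/(1+τ)) (by positivity)
    linarith
  have hmt : 0 ≤ χ*t := mul_nonneg hχ0.le ht
  have hlogτ : b ≤ 2*(χ*t) := by
    have h2 : (1+τ) ≤ (1+χ*t)^2 := by nlinarith
    calc b ≤ Real.log ((1+χ*t)^2) := Real.log_le_log h1 h2
      _ = 2 * Real.log (1+χ*t) := by
          rw [Real.log_pow]; push_cast; ring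
      _ ≤ 2 * (χ*t) := by
          have := Real.log_le_sub_one_of_pos (x := 1+χ*t) (by linarith)
          linarith
  have hlogt : Real.log (1+t) ≤ t := by
    have := Real.log_le_sub_one_of_pos (x := 1+t) (by linarith)
    linarith
  have ha : a ≤ b + Real.log (1+t) := by
    have hm : (1+τ+t) ≤ (1+τ)*(1+t) := by nlinarith
    calc a ≤ Real.log ((1+τ)*(1+t)) := Real.log_le_log (by linarith) hm
      _ = b + Real.log (1+t) := Real.log_mul (by positivity) (by positivity)
  have key : a^2 - b^2 ≤ (t/(1+τ)) * (4*(χ*t) + t) := by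
    have hsum : a + b ≤ 4*(χ*t) + t := by linarith
    have hd0 : 0 ≤ a - b := by linarith
    calc a^2 - b^2 = (a-b)*(a+b) := by ring
      _ ≤ (t/(1+τ)) * (4*(χ*t) + t) :=
          mul_le_mul hd hsum (by linarith) (by positivity)
  have hfin : (t/(1+τ)) * (4*(χ*t) + t) ≤ 6/χ := by
    rw [div_mul_eq_mul_div, div_le_div_iff₀ h1 hχ0]
    have h3 : 0 ≤ t*t*χ*(χ-1) := by nlinarith
    nlinarith [sq_nonneg (χ*t)]
  linarith
end
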